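/- For real symmetric n×n matrices A and B and any permutation matrix X, the trace tr(AXBXᵀ) satisfies Σ_{i=1}^n λ_i(A)μ_i(B) ≤ tr(AXBXᵀ) ≤ Σ_{i=1}^n λ_{n−i+1}(A)μ_i(B), where λ_1(A) ≤ ⋯ ≤ λ_n(A) are the eigenvalues of A in increasing order and μ_1(B) ≥ ⋯ ≥ μ_n(B) are the eigenvalues of B in decreasing order. -/
import Mathlib


open Matrix

/-- Core inequality: a doubly-stochastic average of `lam i * mu j` is bounded
between the anti-sorted and sorted pairings. -/
lemma core_ds_bounds (n : ℕ) (S : Matrix (Fin n) (Fin n) ℝ)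
    (hS : S ∈ doublyStochastic ℝ (Fin n))
    (lam mu : Fin n → ℝ) (hl : Monotone lam) (hm : Antitone mu) :
    (∑ i, lam i * mu i) ≤ (∑ i, ∑ j, S i j * (lam i * mu j)) ∧
      (∑ i, ∑ j, S i j * (lam i * mu j)) ≤ ∑ i : Fin n, lam i.rev * mu i := by
  obtain ⟨w, hw0, hw1, hwS⟩ := exists_eq_sum_perm_of_mem_doublyStochastic hS
  have hSij : ∀ i j, S i j = ∑ π : Equiv.Perm (Fin n), w π * (π.permMatrix ℝ) i j := by
    intro i j
    rw [← hwS]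
    simp [Matrix.sum_apply, smul_eq_mul]
  have hperm : ∀ (π : Equiv.Perm (Fin n)) (i : Fin n),
      (∑ j, (π.permMatrix ℝ) i j * (lam i * mu j)) = lam i * mu (π i) := by
    intro π i
    rw [Finset.sum_eq_single (π i)]
    · simp [Equiv.Perm.permMatrix, PEquiv.toMatrix_apply, Equiv.toPEquiv]
    · intro b _ hb
      simp [Equiv.Perm.permMatrix, PEquiv.toMatrix_apply, Equiv.toPEquiv, Ne.symm hb]
    · simp
  have hsum : (∑ i, ∑ j, S i j * (lam i * mu j))
      = ∑ π : Equiv.Perm (Fin n), w π * ∑ i, lam i * mu (π i) := by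
    calc (∑ i, ∑ j, S i j * (lam i * mu j))
        = ∑ i, ∑ π : Equiv.Perm (Fin n), w π * ∑ j, (π.permMatrix ℝ) i j * (lam i * mu j) := by
          refine Finset.sum_congr rfl fun i _ => ?_
          have : ∀ j, S i j * (lam i * mu j)
              = ∑ π : Equiv.Perm (Fin n), w π * ((π.permMatrix ℝ) i j * (lam i * mu j)) := by
            intro j
            rw [hSij, Finset.sum_mul]
            exact Finset.sum_congr rfl fun π _ => (mul_assoc _ _ _)
          simp_rw [this]
          rw [Finset.sum_comm]
          exact Finset.sum_congr rfl fun π _ => (Finset.mul_sum _ _ _).symm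
      _ = ∑ π : Equiv.Perm (Fin n), ∑ i, w π * ∑ j, (π.permMatrix ℝ) i j * (lam i * mu j) :=
          Finset.sum_comm
      _ = ∑ π : Equiv.Perm (Fin n), w π * ∑ i, lam i * mu (π i) := by
          refine Finset.sum_congr rfl fun π _ => ?_
          rw [Finset.mul_sum]
          exact Finset.sum_congr rfl fun i _ => by rw [hperm π i]
  have hlow : ∀ π : Equiv.Perm (Fin n),
      (∑ i, lam i * mu i) ≤ ∑ i, lam i * mu (π i) :=
    fun π => (hl.antivary hm).sum_mul_le_sum_mul_comp_perm (σ := π)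
  have hhigh : ∀ π : Equiv.Perm (Fin n),
      (∑ i, lam i * mu (π i)) ≤ ∑ i : Fin n, lam i.rev * mu i := by
    intro π
    have hrev : (∑ i, lam i * mu (π i))
        = ∑ i : Fin n, lam i.rev * mu ((Fin.revPerm.trans π) i) := by
      rw [← Equiv.sum_comp Fin.revPerm (fun i => lam i * mu (π i))]
      simp
    rw [hrev]
    have hanti : Antitone (fun i : Fin n => lam i.rev) := by
      intro a b hab
      exact hl (Fin.rev_le_rev.mpr hab)
    exact (hanti.monovary hm).sum_mul_comp_perm_le_sum_mul (σ := Fin.revPerm.trans π)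
  constructor
  · calc (∑ i, lam i * mu i) = ∑ π : Equiv.Perm (Fin n), w π * ∑ i, lam i * mu i := by
          rw [← Finset.sum_mul, hw1, one_mul]
      _ ≤ ∑ π : Equiv.Perm (Fin n), w π * ∑ i, lam i * mu (π i) :=
          Finset.sum_le_sum fun π _ => mul_le_mul_of_nonneg_left (hlow π) (hw0 π)
      _ = _ := hsum.symm
  · calc (∑ i, ∑ j, S i j * (lam i * mu j))
        = ∑ π : Equiv.Perm (Fin n), w π * ∑ i, lam i * mu (π i) := hsum
      _ ≤ ∑ π : Equiv.Perm (Fin n), w π * ∑ i : Fin n, lam i.rev * mu i :=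
          Finset.sum_le_sum fun π _ => mul_le_mul_of_nonneg_left (hhigh π) (hw0 π)
      _ = ∑ i : Fin n, lam i.rev * mu i := by rw [← Finset.sum_mul, hw1, one_mul]

/-- Trace of `D₁ W D₂ Wᵀ` as a weighted sum of squared entries of `W`. -/
lemma trace_diag_sq (n : ℕ) (d1 d2 : Fin n → ℝ) (W : Matrix (Fin n) (Fin n) ℝ) :
    (diagonal d1 * W * diagonal d2 * star W).trace
      = ∑ i, ∑ j, (W i j)^2 * (d1 i * d2 j) := by
  simp only [Matrix.trace, Matrix.diag_apply, Matrix.mul_apply, Matrix.star_eq_conjTranspose,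
    Matrix.conjTranspose_apply, star_trivial, Matrix.diagonal_apply, ite_mul, mul_ite,
    zero_mul, mul_zero, Finset.sum_ite_eq, Finset.sum_ite_eq', Finset.mem_univ, if_true]
  refine Finset.sum_congr rfl fun i _ => Finset.sum_congr rfl fun j _ => by ring

/-- Finke et al.'s eigenvalue bounds for the trace QAP: for real symmetric `A, B`
and a permutation matrix `X`,
`Σ_i λ_i(A)μ_i(B) ≤ tr(AXBXᵀ) ≤ Σ_i λ_{n−i+1}(A)μ_i(B)`, where the `λ_i(A)` are
the eigenvalues of `A` in nondecreasing order and the `μ_i(B)` those of `B` in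
nonincreasing order. -/
theorem trace_QAP_eigenvalue_bounds (n : ℕ)
    (A B X : Matrix (Fin n) (Fin n) ℝ)
    (hA : A.IsHermitian) (hB : B.IsHermitian)
    (σ : Equiv.Perm (Fin n)) (hX : X = Matrix.of fun i j => if σ j = i then (1 : ℝ) else 0)
    (lam : Fin n → ℝ) (hlam_mono : Monotone lam)
    (hlam_enum : ∃ τ : Equiv.Perm (Fin n), lam = hA.eigenvalues ∘ τ)
    (mu : Fin n → ℝ) (hmu_anti : Antitone mu)
    (hmu_enum : ∃ τ : Equiv.Perm (Fin n), mu = hB.eigenvalues ∘ τ) :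
    (∑ i : Fin n, lam i * mu i) ≤ (A * X * B * Xᵀ).trace ∧
      (A * X * B * Xᵀ).trace ≤ ∑ i : Fin n, lam i.rev * mu i := by
  obtain ⟨τ, hτ⟩ := hlam_enum
  obtain ⟨ρ, hρ⟩ := hmu_enum
  have hXmem : X ∈ Matrix.unitaryGroup (Fin n) ℝ := by
    rw [Matrix.mem_unitaryGroup_iff]
    ext i j
    simp only [hX, Matrix.mul_apply, Matrix.star_eq_conjTranspose, Matrix.conjTranspose_apply,
      Matrix.of_apply, star_trivial, Matrix.one_apply]
    rw [Finset.sum_eq_single (σ.symm i)]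
    · simp [Equiv.apply_eq_iff_eq_symm_apply, eq_comm]
    · intro b _ hb
      have : σ b ≠ i := fun h => hb (by simp [← h])
      simp [this]
    · simp
  set U : Matrix (Fin n) (Fin n) ℝ := (hA.eigenvectorUnitary : Matrix (Fin n) (Fin n) ℝ) with hU
  set V : Matrix (Fin n) (Fin n) ℝ := (hB.eigenvectorUnitary : Matrix (Fin n) (Fin n) ℝ) with hV
  set W : Matrix (Fin n) (Fin n) ℝ := star U * X * V with hW
  have hUmem : U ∈ Matrix.unitaryGroup (Fin n) ℝ := SetLike.coe_mem _
  have hVmem : V ∈ Matrix.unitaryGroup (Fin n) ℝ := SetLike.coe_mem _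
  have hWmem : W ∈ Matrix.unitaryGroup (Fin n) ℝ :=
    mul_mem (mul_mem (Unitary.star_mem hUmem) hXmem) hVmem
  have hWW : W * star W = 1 := Matrix.mem_unitaryGroup_iff.mp hWmem
  have hW'W : star W * W = 1 := Matrix.mem_unitaryGroup_iff'.mp hWmem
  have hAspec : A = U * diagonal hA.eigenvalues * star U := by
    have := hA.spectral_theorem
    simpa using this
  have hBspec : B = V * diagonal hB.eigenvalues * star V := by
    have := hB.spectral_theorem
    simpa using this
  have hXt : Xᵀ = star X := by
    ext i j
    simp [Matrix.star_eq_conjTranspose, Matrix.conjTranspose_apply]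
  have htr : (A * X * B * Xᵀ).trace
      = (diagonal hA.eigenvalues * W * diagonal hB.eigenvalues * star W).trace := by
    conv_lhs => rw [hAspec, hBspec, hXt]
    have h1 : U * diagonal hA.eigenvalues * star U * X * (V * diagonal hB.eigenvalues * star V)
        * star X = U * (diagonal hA.eigenvalues * W * diagonal hB.eigenvalues * star W * star U)
        := by
      simp only [hW, Matrix.star_mul, star_star, Matrix.mul_assoc,
        Matrix.mem_unitaryGroup_iff.mp hUmem, Matrix.mul_one]
    rw [h1, Matrix.trace_mul_comm]
    rw [Matrix.mul_assoc, Matrix.mul_assoc, Matrix.mul_assoc]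
    have h2 : star W * (star U * U) = star W := by
      rw [Matrix.mem_unitaryGroup_iff'.mp hUmem, Matrix.mul_one]
    rw [h2]
    simp only [Matrix.mul_assoc]
  -- rows and columns of the squared-entry matrix of `W` sum to 1
  have hrow : ∀ i, (∑ j, (W i j)^2) = 1 := by
    intro i
    have h := congrFun (congrFun hWW i) i
    simp only [Matrix.mul_apply, Matrix.star_eq_conjTranspose, Matrix.conjTranspose_apply,
      star_trivial, Matrix.one_apply_eq] at h
    simp_rw [pow_two]
    exact h
  have hcol : ∀ j, (∑ i, (W i j)^2) = 1 := by
    intro j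
    have h := congrFun (congrFun hW'W j) j
    simp only [Matrix.mul_apply, Matrix.star_eq_conjTranspose, Matrix.conjTranspose_apply,
      star_trivial, Matrix.one_apply_eq] at h
    simp_rw [pow_two]
    exact h
  set S : Matrix (Fin n) (Fin n) ℝ := Matrix.of fun a b => (W (τ a) (ρ b))^2 with hS
  have hSmem : S ∈ doublyStochastic ℝ (Fin n) := by
    rw [mem_doublyStochastic_iff_sum]
    refine ⟨fun a b => sq_nonneg _, fun a => ?_, fun b => ?_⟩
    · rw [show (∑ b, S a b) = ∑ b, (fun j => (W (τ a) j)^2) (ρ b) from rfl,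
        Equiv.sum_comp ρ (fun j => (W (τ a) j)^2)]
      exact hrow (τ a)
    · rw [show (∑ a, S a b) = ∑ a, (fun i => (W i (ρ b))^2) (τ a) from rfl,
        Equiv.sum_comp τ (fun i => (W i (ρ b))^2)]
      exact hcol (ρ b)
  have htr2 : (A * X * B * Xᵀ).trace = ∑ a, ∑ b, S a b * (lam a * mu b) := by
    rw [htr, trace_diag_sq]
    rw [← Equiv.sum_comp τ (fun i => ∑ j, (W i j)^2 * (hA.eigenvalues i * hB.eigenvalues j))]
    refine Finset.sum_congr rfl fun a _ => ?_
    rw [← Equiv.sum_comp ρ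
      (fun j => (W (τ a) j)^2 * (hA.eigenvalues (τ a) * hB.eigenvalues j))]
    refine Finset.sum_congr rfl fun b _ => ?_
    simp only [hS, Matrix.of_apply, hτ, hρ, Function.comp_apply]
  have := core_ds_bounds n S hSmem lam mu hlam_mono hmu_anti
  rw [htr2]
  exact this
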